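/- Let $k$ be a field of characteristic $p > 0$, let $a \in k$ be an element with no $p$-th root in $k$, let $q = p^s$ with $s \ge 1$, and let $k' = k[X]/(X^q - a)$ (a purely inseparable field extension of $k$ of degree $q$). Let $K$ be an algebraic closure of $k$. Then: (i) the $k$-linear representation of the group $k'^\times$ on $k'$ by multiplication is irreducible (the only invariant $k$-subspaces are $0$ and $k'$); while (ii) the $K$-linear representation of $k'^\times$ on $K \otimes_k k'$, where $u$ acts by multiplication by $1 \otimes u$, is not semisimple. -/

import Mathlib

/-!
Adjoining a `p ^ s`-th root `x` of `a` gives a field `k'`, because `X ^ p ^ s - a` is irreducible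
(the minimal polynomial of a root is some `X ^ p ^ n - y`, and `n < s` would make `a` a `p`-th
power); so `k'ˣ` acts transitively on `k' ∖ {0}` and no proper nonzero subspace is invariant.
Over the algebraic closure, `a = b ^ p ^ s` and `t = 1 ⊗ x - b ⊗ 1` is a nonzero nilpotent of
`K ⊗ k'`. The nilradical is invariant, and an invariant complement would be an ideal of `K ⊗ k'`
containing a unit `1 - n` with `n` nilpotent, hence everything, forcing the nilradical to vanish.
-/

open Polynomial TensorProduct

theorem X_pow_char_pow_sub_C_irreducible {k : Type*} [Field k] {p : ℕ} (hp : p.Prime) [CharP k p]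
    {a : k} (ha : ∀ b : k, b ^ p ≠ a) (s : ℕ) :
    Irreducible (X ^ (p ^ s) - C a : k[X]) := by
  have : ExpChar k p := .prime hp
  have hq : 0 < p ^ s := pow_pos hp.pos s
  have hf : (X ^ (p ^ s) - C a : k[X]).Monic := monic_X_pow_sub_C a hq.ne'
  obtain ⟨b, hb⟩ := IsAlgClosed.exists_pow_nat_eq (algebraMap k (AlgebraicClosure k) a) hq
  have hroot : aeval b (X ^ (p ^ s) - C a) = 0 := by simp [hb]
  have hb_int : IsIntegral k b := ⟨_, hf, by rwa [← aeval_def]⟩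
  obtain ⟨n, y, hmin⟩ := (minpoly.natSepDegree_eq_one_iff_eq_X_pow_sub_C p).1
    ((minpoly.natSepDegree_eq_one_iff_pow_mem p).2 ⟨s, a, hb.symm⟩)
  have hdvd : minpoly k b ∣ X ^ (p ^ s) - C a := minpoly.dvd k b hroot
  have hns : n ≤ s := by
    have := natDegree_le_of_dvd hdvd hf.ne_zero
    rwa [hmin, natDegree_X_pow_sub_C, natDegree_X_pow_sub_C,
      Nat.pow_le_pow_iff_right hp.one_lt] at this
  obtain rfl | hlt := hns.eq_or_lt
  · rw [eq_of_monic_of_dvd_of_natDegree_le (minpoly.monic hb_int) hf hdvd (by simp [hmin])]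
    exact minpoly.irreducible hb_int
  · obtain ⟨m, rfl⟩ : ∃ m, s = n + m + 1 := ⟨s - n - 1, by omega⟩
    have hby : b ^ p ^ n = algebraMap k _ y := by
      simpa [hmin, sub_eq_zero] using minpoly.aeval k b
    refine (ha (y ^ p ^ m) ((algebraMap k (AlgebraicClosure k)).injective ?_)).elim
    rw [← hb, map_pow, map_pow, ← hby, ← pow_mul, ← pow_mul, ← pow_succ, ← pow_add, add_assoc]

theorem Submodule.eq_bot_or_eq_top_of_forall_units_mul_mem {k L : Type*} [Semiring k]
    [DivisionRing L] [Module k L] (N : Submodule k L)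
    (hN : ∀ u : Lˣ, ∀ v ∈ N, (u : L) * v ∈ N) : N = ⊥ ∨ N = ⊤ := by
  refine or_iff_not_imp_left.2 fun hbot ↦ eq_top_iff.2 fun w _ ↦ ?_
  obtain ⟨v, hvN, hv0⟩ := N.exists_mem_ne_zero_of_ne_bot hbot
  obtain rfl | hw := eq_or_ne w 0
  · exact N.zero_mem
  simpa [hv0] using hN (Units.mk0 (w * v⁻¹) (mul_ne_zero hw (inv_ne_zero hv0))) v hvN

theorem Submodule.mul_mem_of_forall_units_one_tmul_mul_mem {k K L : Type*} [CommSemiring k]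
    [CommSemiring K] [Algebra k K] [DivisionRing L] [Algebra k L]
    (Q : Submodule K (K ⊗[k] L)) (hQ : ∀ u : Lˣ, ∀ v ∈ Q, ((1 : K) ⊗ₜ[k] (u : L)) * v ∈ Q)
    (z : K ⊗[k] L) {v : K ⊗[k] L} (hv : v ∈ Q) : z * v ∈ Q := by
  induction z using TensorProduct.induction_on with
  | zero => simp
  | tmul c y =>
    obtain rfl | hy := eq_or_ne y 0
    · simp
    have : c ⊗ₜ[k] y * v = c • ((1 : K) ⊗ₜ[k] y * v) := by
      rw [← smul_mul_assoc, smul_tmul', smul_eq_mul, mul_one]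
    exact this ▸ Q.smul_mem c (hQ (Units.mk0 y hy) v hv)
  | add z₁ z₂ h₁ h₂ => simpa [add_mul] using Q.add_mem h₁ h₂

theorem isReduced_of_isCompl_nilradical {K A : Type*} [CommRing K] [CommRing A] [Algebra K A]
    {Q : Submodule K A} (hQ : ∀ (z : A) {v : A}, v ∈ Q → z * v ∈ Q)
    (hcompl : IsCompl ((nilradical A).restrictScalars K) Q) : IsReduced A := by
  obtain ⟨n, hn, w, hw, hnw⟩ :=
    Submodule.mem_sup.1 (hcompl.sup_eq_top ▸ Submodule.mem_top (x := (1 : A)))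
  have hw_unit : IsUnit w := by
    simpa [← hnw] using (show IsNilpotent n from hn).isUnit_one_sub
  have hQ_top : Q = ⊤ := eq_top_iff.2 fun z _ ↦ by
    simpa [hw_unit.unit_spec, mul_assoc] using hQ (z * ↑hw_unit.unit⁻¹) hw
  have hdisj := hcompl.inf_eq_bot
  rw [hQ_top, inf_top_eq, Submodule.restrictScalars_eq_bot_iff] at hdisj
  exact nilradical_eq_bot_iff.1 hdisj

theorem TensorProduct.one_tmul_sub_tmul_ne_zero {k K M : Type*} [CommRing k] [CommRing K]
    [Nontrivial K] [Algebra k K] [AddCommGroup M] [Module k M] {x y : M} (φ : M →ₗ[k] k)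
    (hx : φ x = 1) (hy : φ y = 0) (b : K) : (1 : K) ⊗ₜ[k] x - b ⊗ₜ[k] y ≠ 0 := by
  intro h
  have := congr_arg ((TensorProduct.rid k K).toLinearMap ∘ₗ φ.lTensor K) h
  simp [hx, hy] at this

theorem not_isReduced_tensorProduct_adjoinRoot {k K : Type*} [Field k] [CommRing K] [Nontrivial K]
    [Algebra k K]
    {p : ℕ} (hp : p.Prime) [CharP k p] {a : k} {s : ℕ} (hs : 1 ≤ s) {b : K}
    (hb : b ^ p ^ s = algebraMap k K a) :
    ¬ IsReduced (K ⊗[k] AdjoinRoot (X ^ (p ^ s) - C a : k[X])) := by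
  set f : k[X] := X ^ (p ^ s) - C a
  have hf : f.Monic := monic_X_pow_sub_C a (pow_pos hp.pos s).ne'
  set pb := AdjoinRoot.powerBasis' hf
  have hdim : 1 < pb.dim := by
    simpa [pb, f, natDegree_X_pow_sub_C] using Nat.one_lt_pow (by omega) hp.one_lt
  have hroot : pb.basis ⟨1, hdim⟩ = AdjoinRoot.root f := by simp [pb.basis_eq_pow, pb]
  have hone : pb.basis ⟨0, by omega⟩ = 1 := by simp [pb.basis_eq_pow]
  set t : K ⊗[k] AdjoinRoot f := (1 : K) ⊗ₜ[k] AdjoinRoot.root f - b ⊗ₜ[k] 1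
  have ht0 : t ≠ 0 := one_tmul_sub_tmul_ne_zero (pb.basis.coord ⟨1, hdim⟩)
    (by rw [Module.Basis.coord_apply, ← hroot, pb.basis.repr_self, Finsupp.single_eq_same])
    (by rw [Module.Basis.coord_apply, ← hone, pb.basis.repr_self,
      Finsupp.single_eq_of_ne (by simp)]) b
  have : Nontrivial (K ⊗[k] AdjoinRoot f) := nontrivial_of_ne t 0 ht0
  have : ExpChar k p := .prime hp
  have : ExpChar (K ⊗[k] AdjoinRoot f) p :=
    expChar_of_injective_algebraMap (algebraMap k _).injective p
  have ht : IsNilpotent t := ⟨p ^ s, by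
    rw [sub_pow_expChar_pow, Algebra.TensorProduct.tmul_pow, Algebra.TensorProduct.tmul_pow,
      one_pow, one_pow, hb, root_X_pow_sub_C_pow, ← AdjoinRoot.algebraMap_eq,
      Algebra.algebraMap_eq_smul_one, Algebra.algebraMap_eq_smul_one, smul_tmul, sub_self]⟩
  exact fun _ ↦ ht0 ht.eq_zero

/-- Let `k` be a field of characteristic `p > 0`, let `a ∈ k` have no `p`-th root in `k`, let
`q = p ^ s` with `s ≥ 1`, and let `k' = k[X]/(X^q - a)` (a purely inseparable field extension
of `k` of degree `q`).  Let `K` be an algebraic closure of `k`.  Then: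
(i) the `k`-linear representation of `k'ˣ` on `k'` by multiplication is irreducible (the only
invariant `k`-subspaces are `⊥` and `⊤`); while
(ii) the `K`-linear representation of `k'ˣ` on `K ⊗[k] k'`, where `u` acts by multiplication by
`1 ⊗ u`, is not semisimple (some invariant `K`-subspace has no invariant complement). -/
theorem stmt9 (k : Type*) [Field k] (p : ℕ) (hp : p.Prime) [CharP k p]
    (a : k) (ha : ∀ b : k, b ^ p ≠ a) (s : ℕ) (hs : 1 ≤ s)
    (K : Type*) [Field K] [Algebra k K] [IsAlgClosure k K] :
    (∀ N : Submodule k (AdjoinRoot (X ^ (p ^ s) - C a : Polynomial k)),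
      (∀ u : (AdjoinRoot (X ^ (p ^ s) - C a : Polynomial k))ˣ,
        ∀ v ∈ N, (u : AdjoinRoot (X ^ (p ^ s) - C a : Polynomial k)) * v ∈ N) →
      N = ⊥ ∨ N = ⊤) ∧
    ∃ N : Submodule K (K ⊗[k] AdjoinRoot (X ^ (p ^ s) - C a : Polynomial k)),
      (∀ u : (AdjoinRoot (X ^ (p ^ s) - C a : Polynomial k))ˣ,
        ∀ v ∈ N, (1 ⊗ₜ[k] (u : AdjoinRoot (X ^ (p ^ s) - C a : Polynomial k)) :
          K ⊗[k] AdjoinRoot (X ^ (p ^ s) - C a : Polynomial k)) * v ∈ N) ∧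
      ¬ ∃ Q : Submodule K (K ⊗[k] AdjoinRoot (X ^ (p ^ s) - C a : Polynomial k)),
        (∀ u : (AdjoinRoot (X ^ (p ^ s) - C a : Polynomial k))ˣ,
          ∀ v ∈ Q, (1 ⊗ₜ[k] (u : AdjoinRoot (X ^ (p ^ s) - C a : Polynomial k)) :
            K ⊗[k] AdjoinRoot (X ^ (p ^ s) - C a : Polynomial k)) * v ∈ Q) ∧
        IsCompl N Q := by
  have := Fact.mk (X_pow_char_pow_sub_C_irreducible hp ha s)
  refine ⟨fun N hN ↦ N.eq_bot_or_eq_top_of_forall_units_mul_mem hN,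
    (nilradical _).restrictScalars K, fun _ _ hv ↦ Ideal.mul_mem_left _ _ hv, ?_⟩
  rintro ⟨Q, hQ, hcompl⟩
  have : IsAlgClosed K := IsAlgClosure.isAlgClosed k
  obtain ⟨b, hb⟩ := IsAlgClosed.exists_pow_nat_eq (algebraMap k K a) (pow_pos hp.pos s)
  exact not_isReduced_tensorProduct_adjoinRoot hp hs hb
    (isReduced_of_isCompl_nilradical (Q.mul_mem_of_forall_units_one_tmul_mul_mem hQ) hcompl)
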